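/- If the constraint 4 M_φ Δt (2/(Δx)² + L) ≤ 1 holds, where L bounds the Lipschitz constant on [0,1] of the reaction term f(φ) = 4g(φ)φ(1-φ)(φ-1/2+β) with f(0)=f(1)=0, then the explicit finite-difference scheme for the modified Allen-Cahn equation preserves the invariant interval: 0 ≤ φ_{i,j}^n ≤ 1 for all (i,j) implies 0 ≤ φ_{i,j}^{n+1} ≤ 1. -/

import Mathlib

open Set
open scoped NNReal

/- Monotone in `s` and `y`; at the extreme values `s = 0, y = -L a` and `s = k, y = L (1 - a)`
the update equals `a (1 - k r - c L)` and `1 - (1 - a) (1 - k r - c L)`. -/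
theorem add_diffusion_reaction_mem_Icc {k r c L a s y : ℝ} (hr : 0 ≤ r) (hc : 0 ≤ c)
    (hstab : k * r + c * L ≤ 1) (ha : a ∈ Icc 0 1) (hs : s ∈ Icc 0 k)
    (hy : y ∈ Icc (-(L * a)) (L * (1 - a))) :
    a + r * (s - k * a) + c * y ∈ Icc 0 1 := by
  obtain ⟨ha0, ha1⟩ := ha
  obtain ⟨hs0, hsk⟩ := hs
  obtain ⟨hy0, hy1⟩ := hy
  constructor
  · nlinarith [mul_nonneg hr hs0, mul_nonneg hc (neg_le_iff_add_nonneg.mp hy0),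
      mul_nonneg ha0 (sub_nonneg.mpr hstab)]
  · nlinarith [mul_nonneg hr (sub_nonneg.mpr hsk), mul_nonneg hc (sub_nonneg.mpr hy1),
      mul_nonneg (sub_nonneg.mpr ha1) (sub_nonneg.mpr hstab)]

theorem LipschitzOnWith.mem_Icc_of_map_zero_of_map_one {f : ℝ → ℝ} {K : ℝ≥0}
    (hf : LipschitzOnWith K f (Icc 0 1)) (h0 : f 0 = 0) (h1 : f 1 = 0) {x : ℝ}
    (hx : x ∈ Icc 0 1) : f x ∈ Icc (-(K * x)) (K * (1 - x)) := by
  have hdist0 := hf.dist_le_mul x hx 0 (left_mem_Icc.mpr zero_le_one)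
  have hdist1 := hf.dist_le_mul x hx 1 (right_mem_Icc.mpr zero_le_one)
  rw [h0, Real.dist_eq, Real.dist_eq, sub_zero, sub_zero, abs_of_nonneg hx.1] at hdist0
  rw [h1, Real.dist_eq, Real.dist_eq, sub_zero, abs_sub_comm, abs_of_nonneg (sub_nonneg.mpr hx.2)]
    at hdist1
  exact ⟨(abs_le.mp hdist0).1, (abs_le.mp hdist1).2⟩

theorem allen_cahn_scheme_invariant_interval_general
    (Mφ Δt Δx L : ℝ) (hM : 0 < Mφ) (hΔt : 0 < Δt) (hL : 0 ≤ L)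
    (f : ℝ → ℝ)
    (hf0 : f 0 = 0) (hf1 : f 1 = 0)
    (hlip : LipschitzOnWith (Real.toNNReal L) f (Set.Icc 0 1))
    (hstab : 4 * Mφ * Δt * (2 / Δx^2 + L) ≤ 1)
    (φ φ' : ℤ → ℤ → ℝ)
    (h01 : ∀ i j, φ i j ∈ Set.Icc (0:ℝ) 1)
    (hscheme : ∀ i j, φ' i j = φ i j + Mφ * Δt *
      ((φ (i+1) j + φ (i-1) j + φ i (j+1) + φ i (j-1) - 4 * φ i j) / Δx^2
        + f (φ i j))) :
    ∀ i j, φ' i j ∈ Set.Icc (0:ℝ) 1 := by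
  intro i j
  have hneighbours : φ (i+1) j + φ (i-1) j + φ i (j+1) + φ i (j-1) ∈ Icc (0:ℝ) 4 :=
    ⟨by linarith [(h01 (i+1) j).1, (h01 (i-1) j).1, (h01 i (j+1)).1, (h01 i (j-1)).1],
      by linarith [(h01 (i+1) j).2, (h01 (i-1) j).2, (h01 i (j+1)).2, (h01 i (j-1)).2]⟩
  have hc : 0 ≤ Mφ * Δt := by positivity
  have hr : 0 ≤ Mφ * Δt / Δx ^ 2 := by positivity
  have hstab' : 4 * (Mφ * Δt / Δx ^ 2) + Mφ * Δt * L ≤ 1 := by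
    have hexpand : 4 * Mφ * Δt * (2 / Δx ^ 2 + L) = 8 * (Mφ * Δt / Δx ^ 2) + 4 * (Mφ * Δt * L) := by ring
    linarith [mul_nonneg hc hL, hexpand]
  have hreaction := hlip.mem_Icc_of_map_zero_of_map_one hf0 hf1 (h01 i j)
  rw [Real.coe_toNNReal L hL] at hreaction
  rw [hscheme]
  convert add_diffusion_reaction_mem_Icc hr hc hstab' (h01 i j) hneighbours hreaction using 1
  ring

/-- Invariant interval `[0,1]` for the explicit finite-difference scheme for
the modified Allen–Cahn equation, under the stability constraint
`4 M_φ Δt (2/Δx² + L) ≤ 1`. -/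
theorem allen_cahn_scheme_invariant_interval
    (Mφ Δt Δx β L : ℝ) (hM : 0 < Mφ) (hΔt : 0 < Δt) (hΔx : 0 < Δx) (hL : 0 ≤ L)
    (g f : ℝ → ℝ) (hg : ContinuousOn g (Set.Icc 0 1))
    (hf : ∀ φ, f φ = 4 * g φ * φ * (1 - φ) * (φ - 1/2 + β))
    (hf0 : f 0 = 0) (hf1 : f 1 = 0)
    (hlip : LipschitzOnWith (Real.toNNReal L) f (Set.Icc 0 1))
    (hstab : 4 * Mφ * Δt * (2 / Δx^2 + L) ≤ 1)
    (φ φ' : ℤ → ℤ → ℝ)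
    (h01 : ∀ i j, φ i j ∈ Set.Icc (0:ℝ) 1)
    (hscheme : ∀ i j, φ' i j = φ i j + Mφ * Δt *
      ((φ (i+1) j + φ (i-1) j + φ i (j+1) + φ i (j-1) - 4 * φ i j) / Δx^2
        + f (φ i j))) :
    ∀ i j, φ' i j ∈ Set.Icc (0:ℝ) 1 :=
  allen_cahn_scheme_invariant_interval_general Mφ Δt Δx L hM hΔt hL f hf0 hf1 hlip hstab φ φ' h01
    hscheme
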